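/- Let G be a finite simple graph with vertex set V, let c > 0, and let S_1, …, S_k ⊆ V be pairwise disjoint vertex sets. For 0 ≤ j ≤ k set W_j := V ∖ (S_1 ∪ … ∪ S_j), and suppose |E(S_j, W_j)| ≤ c·Vol(S_j) for each 1 ≤ j ≤ k. Let U := S_1 ∪ … ∪ S_k. Then |∂U| ≤ c·Vol(U). Moreover, if in addition Vol(U) ≤ (47/48)·Vol(V), then |∂U| ≤ 47c·min(Vol(U), Vol(V∖U)); in particular, if U is a nonempty proper subset of V then Φ(U) ≤ 47c. -/

import Mathlib

/-! An edge leaving `U` leaves it from some `S_j`, and its other endpoint lies outside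
`U ⊇ S₁ ∪ ⋯ ∪ S_j`, i.e. in `W_j`; so `|∂U| ≤ ∑ⱼ |E(S_j, W_j)| ≤ c ∑ⱼ Vol(S_j) = c·Vol(U)`, the
last step by disjointness. If `Vol(U) ≤ (47/48)·Vol(V)` then `Vol(U) ≤ 47·Vol(V∖U)`, so
`c·Vol(U) ≤ 47c·min(Vol(U), Vol(V∖U))`. -/

open Finset

/-- The volume of a vertex set: the sum of the degrees (in `G`) of its vertices. -/
def gvol {V : Type*} [Fintype V] (G : SimpleGraph V) [DecidableRel G.Adj]
    (S : Finset V) : ℕ :=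
  ∑ v ∈ S, G.degree v

/-- The number of edges of `G` with one endpoint in `S` and the other in `T`
(for disjoint `S`, `T`, counted as ordered pairs `(s, t) ∈ S × T` with `s ~ t`). -/
def gcut {V : Type*} [Fintype V] [DecidableEq V] (G : SimpleGraph V) [DecidableRel G.Adj]
    (S T : Finset V) : ℕ :=
  ((S ×ˢ T).filter fun p => G.Adj p.1 p.2).card

section

variable {V : Type*} [Fintype V] [DecidableEq V] (G : SimpleGraph V) [DecidableRel G.Adj]

theorem gvol_biUnion {ι : Type*} {s : Finset ι} {S : ι → Finset V}
    (hS : (s : Set ι).PairwiseDisjoint S) :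
    gvol G (s.biUnion S) = ∑ i ∈ s, gvol G (S i) :=
  sum_biUnion hS

theorem gvol_add_gvol_compl (U : Finset V) :
    gvol G U + gvol G Uᶜ = gvol G univ :=
  sum_add_sum_compl U _

theorem gcut_mono_right (S : Finset V) {T T' : Finset V} (h : T ⊆ T') :
    gcut G S T ≤ gcut G S T' :=
  card_le_card <| filter_subset_filter _ <| product_subset_product_right h

theorem gcut_biUnion_left_le {ι : Type*} (s : Finset ι) (S : ι → Finset V) (T : Finset V) :
    gcut G (s.biUnion S) T ≤ ∑ i ∈ s, gcut G (S i) T := by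
  refine le_trans (card_le_card ?_) card_biUnion_le
  intro p hp
  simp only [mem_filter, mem_product, mem_biUnion] at hp ⊢
  obtain ⟨⟨⟨i, hi, hp₁⟩, hp₂⟩, hadj⟩ := hp
  exact ⟨i, hi, ⟨hp₁, hp₂⟩, hadj⟩

theorem gcut_biUnion_compl_le_mul_gvol {ι : Type*} {s : Finset ι} {S : ι → Finset V}
    (hS : (s : Set ι).PairwiseDisjoint S) {c : ℝ}
    (hsparse : ∀ i ∈ s, (gcut G (S i) (s.biUnion S)ᶜ : ℝ) ≤ c * gvol G (S i)) :
    (gcut G (s.biUnion S) (s.biUnion S)ᶜ : ℝ) ≤ c * gvol G (s.biUnion S) := by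
  calc (gcut G (s.biUnion S) (s.biUnion S)ᶜ : ℝ)
      ≤ ∑ i ∈ s, (gcut G (S i) (s.biUnion S)ᶜ : ℝ) := by
        exact_mod_cast gcut_biUnion_left_le G s S _
    _ ≤ ∑ i ∈ s, c * gvol G (S i) := sum_le_sum hsparse
    _ = c * gvol G (s.biUnion S) := by
        rw [gvol_biUnion G hS, Nat.cast_sum, mul_sum]

end

theorem le_mul_mul_min_of_le_mul {x c a b K : ℝ} (hc : 0 ≤ c) (ha : 0 ≤ a) (hK : 1 ≤ K)
    (hab : a ≤ K * b) (hx : x ≤ c * a) : x ≤ K * c * min a b := by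
  rcases min_cases a b with ⟨hm, -⟩ | ⟨hm, -⟩ <;> rw [hm]
  · nlinarith [mul_nonneg (sub_nonneg.2 hK) (mul_nonneg hc ha)]
  · nlinarith [mul_le_mul_of_nonneg_left hab hc]

/-- Let `c > 0` and `S₁, …, S_k ⊆ V` pairwise disjoint. For `0 ≤ j ≤ k` set
`W_j := V ∖ (S₁ ∪ ⋯ ∪ S_j)` and suppose `|E(S_j, W_j)| ≤ c·Vol(S_j)` for each `1 ≤ j ≤ k`.
Let `U := S₁ ∪ ⋯ ∪ S_k`. Then `|∂U| ≤ c·Vol(U)`. Moreover, if in addition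
`Vol(U) ≤ (47/48)·Vol(V)`, then `|∂U| ≤ 47c·min(Vol U, Vol(V∖U))`; in particular, if `U` is a
nonempty proper subset of `V` then `Φ(U) ≤ 47c`. -/
theorem union_of_successive_sparse_cuts_is_sparse
    {V : Type*} [Fintype V] [DecidableEq V] (G : SimpleGraph V) [DecidableRel G.Adj]
    (c : ℝ) (hc : 0 < c) (k : ℕ) (S : Fin k → Finset V)
    (hdisj : ∀ i j, i ≠ j → Disjoint (S i) (S j))
    (W : Fin k → Finset V)
    (hW : ∀ j, W j = Finset.univ \ ((Finset.univ.filter fun i => i ≤ j).biUnion S))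
    (hsparse : ∀ j, (gcut G (S j) (W j) : ℝ) ≤ c * gvol G (S j))
    (U : Finset V) (hU : U = Finset.univ.biUnion S) :
    (gcut G U Uᶜ : ℝ) ≤ c * gvol G U ∧
    ((gvol G U : ℝ) ≤ (47 / 48) * gvol G Finset.univ →
      (gcut G U Uᶜ : ℝ) ≤ 47 * c * min (gvol G U : ℝ) (gvol G Uᶜ : ℝ) ∧
      (U.Nonempty → U ≠ Finset.univ →
        (gcut G U Uᶜ : ℝ) / min (gvol G U : ℝ) (gvol G Uᶜ : ℝ) ≤ 47 * c)) := by
  have hcompl_sub : ∀ j, Uᶜ ⊆ W j := fun j => by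
    rw [hW, hU, ← compl_eq_univ_sdiff]
    exact compl_subset_compl.2 (biUnion_subset_biUnion_of_subset_left S (subset_univ _))
  have hcut : (gcut G U Uᶜ : ℝ) ≤ c * gvol G U := by
    subst hU
    refine gcut_biUnion_compl_le_mul_gvol G (fun i _ j _ hij => hdisj i j hij) fun j _ => ?_
    exact le_trans (by exact_mod_cast gcut_mono_right G (S j) (hcompl_sub j)) (hsparse j)
  refine ⟨hcut, fun hbal => ?_⟩
  have hvol : (gvol G U : ℝ) ≤ 47 * gvol G Uᶜ := by
    rw [← gvol_add_gvol_compl G U, Nat.cast_add] at hbal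
    linarith
  have hcut_min := le_mul_mul_min_of_le_mul hc.le (Nat.cast_nonneg _) (by norm_num) hvol hcut
  exact ⟨hcut_min, fun _ _ =>
    div_le_of_le_mul₀ (le_min (Nat.cast_nonneg _) (Nat.cast_nonneg _)) (by positivity) hcut_min⟩
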